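/- Trace-distance bound for pure states: let n be a nonempty finite type and u, v : EuclideanSpace ℂ n with ‖u‖ = 1 and ‖v‖ = 1. Let ρ_u := Matrix.vecMulVec u (star u) and ρ_v := Matrix.vecMulVec v (star v) be the corresponding rank-one density matrices. Then Re(Tr((ρ_u - ρ_v)₊)) ≤ Real.sqrt(1 - ‖⟪u, v⟫‖²), where ⟪·,·⟫ is the inner product on EuclideanSpace ℂ n. -/

import Mathlib

/-! In an eigenbasis `e` of `A = |u⟩⟨u| - |v⟩⟨v|` the eigenvalues are `xᵢ² - yᵢ²`, where
`xᵢ = |⟪eᵢ, u⟫|` and `yᵢ = |⟪eᵢ, v⟫|`, so `Tr A₊ = ∑ max (xᵢ² - yᵢ²) 0`. Since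
`∑ xᵢ² = ∑ yᵢ² = 1`, this is `½ ∑ |xᵢ + yᵢ| |xᵢ - yᵢ|`, which Cauchy–Schwarz bounds by
`½ √((2 + 2F) (2 - 2F)) = √(1 - F²)` with `F = ∑ xᵢ yᵢ`; and `|⟪u, v⟫| ≤ F` on expanding
`⟪u, v⟫ = ∑ ⟪u, eᵢ⟫ ⟪eᵢ, v⟫`. -/

open Matrix
open scoped InnerProductSpace

/-- The positive part of a matrix, given by the continuous functional calculus
applied to `fun x => max x 0` (for a Hermitian matrix this replaces each
eigenvalue `x` in the spectral decomposition by `max x 0`). -/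
noncomputable def matPosPart {n : Type*} [Fintype n] [DecidableEq n]
    (A : Matrix n n ℂ) : Matrix n n ℂ :=
  cfc (fun x : ℝ => max x 0) A

namespace Finset

variable {ι : Type*} (s : Finset ι)

theorem sum_max_zero_eq_half_sum_abs {a : ι → ℝ} (ha : ∑ i ∈ s, a i = 0) :
    ∑ i ∈ s, max (a i) 0 = (∑ i ∈ s, |a i|) / 2 := by
  have hmax (t : ℝ) : max t 0 = (|t| + t) / 2 := by
    rcases le_total t 0 with h | h
    · rw [max_eq_right h, abs_of_nonpos h]; ring
    · rw [max_eq_left h, abs_of_nonneg h]; ring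
  simp only [hmax, ← sum_div, sum_add_distrib, ha, add_zero]

theorem sq_sum_abs_sq_sub_sq_le (x y : ι → ℝ) :
    (∑ i ∈ s, |x i ^ 2 - y i ^ 2|) ^ 2
      ≤ (∑ i ∈ s, (x i + y i) ^ 2) * ∑ i ∈ s, (x i - y i) ^ 2 := by
  simpa only [← abs_mul, ← sq_sub_sq, sq_abs] using
    sum_mul_sq_le_sq_mul_sq s (fun i => |x i + y i|) (fun i => |x i - y i|)

theorem sum_max_sq_sub_sq_le_sqrt {x y : ι → ℝ} (hx : ∑ i ∈ s, x i ^ 2 = 1)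
    (hy : ∑ i ∈ s, y i ^ 2 = 1) :
    ∑ i ∈ s, max (x i ^ 2 - y i ^ 2) 0 ≤ √(1 - (∑ i ∈ s, x i * y i) ^ 2) := by
  set F := ∑ i ∈ s, x i * y i
  have hplus : ∑ i ∈ s, (x i + y i) ^ 2 = 2 + 2 * F := by
    simp only [add_sq, sum_add_distrib, mul_assoc, ← mul_sum, hx, hy, F]
    ring
  have hminus : ∑ i ∈ s, (x i - y i) ^ 2 = 2 - 2 * F := by
    simp only [sub_sq, sum_add_distrib, sum_sub_distrib, mul_assoc, ← mul_sum, hx, hy, F]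
    ring
  have hCS := sq_sum_abs_sq_sub_sq_le s x y
  rw [hplus, hminus] at hCS
  rw [sum_max_zero_eq_half_sum_abs s (by rw [sum_sub_distrib, hx, hy, sub_self])]
  apply Real.le_sqrt_of_sq_le
  nlinarith

end Finset

namespace OrthonormalBasis

variable {ι 𝕜 E : Type*} [Fintype ι] [RCLike 𝕜] [NormedAddCommGroup E] [InnerProductSpace 𝕜 E]
  (b : OrthonormalBasis ι 𝕜 E)

theorem norm_inner_le_sum_norm_inner_mul_norm_inner (u v : E) :
    ‖⟪u, v⟫_𝕜‖ ≤ ∑ i, ‖⟪b i, u⟫_𝕜‖ * ‖⟪b i, v⟫_𝕜‖ := by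
  rw [← b.sum_inner_mul_inner u v]
  refine (norm_sum_le _ _).trans_eq (Finset.sum_congr rfl fun i _ => ?_)
  rw [norm_mul, norm_inner_symm]

theorem sum_max_sq_norm_inner_sub_sq_norm_inner_le {u v : E} (hu : ‖u‖ = 1) (hv : ‖v‖ = 1) :
    ∑ i, max (‖⟪b i, u⟫_𝕜‖ ^ 2 - ‖⟪b i, v⟫_𝕜‖ ^ 2) 0 ≤ √(1 - ‖⟪u, v⟫_𝕜‖ ^ 2) := by
  have hu1 : ∑ i, ‖⟪b i, u⟫_𝕜‖ ^ 2 = 1 := by rw [b.sum_sq_norm_inner_right, hu, one_pow]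
  have hv1 : ∑ i, ‖⟪b i, v⟫_𝕜‖ ^ 2 = 1 := by rw [b.sum_sq_norm_inner_right, hv, one_pow]
  refine (Finset.univ.sum_max_sq_sub_sq_le_sqrt hu1 hv1).trans (Real.sqrt_le_sqrt ?_)
  have hF := b.norm_inner_le_sum_norm_inner_mul_norm_inner u v
  gcongr

end OrthonormalBasis

namespace Matrix

theorem isHermitian_vecMulVec_star {n α : Type*} [Mul α] [StarMul α] (w : n → α) :
    (vecMulVec w (star w)).IsHermitian := by
  rw [IsHermitian, conjTranspose_vecMulVec, star_star]

variable {n 𝕜 : Type*} [Fintype n] [RCLike 𝕜]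

theorem star_dotProduct_vecMulVec_star_mulVec (w x : EuclideanSpace 𝕜 n) :
    star (x : n → 𝕜) ⬝ᵥ (vecMulVec (w : n → 𝕜) (star (w : n → 𝕜)) *ᵥ (x : n → 𝕜))
      = ⟪x, w⟫_𝕜 * ⟪w, x⟫_𝕜 := by
  rw [vecMulVec_mulVec, op_smul_eq_smul, dotProduct_smul, smul_eq_mul, mul_comm,
    dotProduct_comm, ← EuclideanSpace.inner_eq_star_dotProduct, dotProduct_comm,
    ← EuclideanSpace.inner_eq_star_dotProduct]

theorem IsHermitian.eigenvalues_vecMulVec_star_sub [DecidableEq n] {u v : EuclideanSpace 𝕜 n}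
    (hA : (vecMulVec (u : n → 𝕜) (star (u : n → 𝕜))
      - vecMulVec (v : n → 𝕜) (star (v : n → 𝕜))).IsHermitian) (i : n) :
    hA.eigenvalues i
      = ‖⟪hA.eigenvectorBasis i, u⟫_𝕜‖ ^ 2 - ‖⟪hA.eigenvectorBasis i, v⟫_𝕜‖ ^ 2 := by
  rw [hA.eigenvalues_eq, sub_mulVec, dotProduct_sub, map_sub,
    star_dotProduct_vecMulVec_star_mulVec, star_dotProduct_vecMulVec_star_mulVec,
    inner_mul_symm_re_eq_norm, inner_mul_symm_re_eq_norm, norm_mul, norm_mul,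
    norm_inner_symm u, norm_inner_symm v, sq, sq]

theorem IsHermitian.trace_cfc [DecidableEq n] {A : Matrix n n 𝕜} (hA : A.IsHermitian)
    (f : ℝ → ℝ) :
    (cfc f A).trace = ∑ i, (f (hA.eigenvalues i) : 𝕜) := by
  rw [hA.cfc_eq, IsHermitian.cfc, Unitary.conjStarAlgAut_apply, trace_mul_cycle,
    Unitary.coe_star_mul_self, one_mul, trace_diagonal]
  rfl

end Matrix

theorem trace_posPart_pure_states_le
    {n : Type*} [Fintype n] [DecidableEq n]
    (u v : EuclideanSpace ℂ n) (hu : ‖u‖ = 1) (hv : ‖v‖ = 1) :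
    (matPosPart (Matrix.vecMulVec (u : n → ℂ) (star (u : n → ℂ))
        - Matrix.vecMulVec (v : n → ℂ) (star (v : n → ℂ)))).trace.re
      ≤ Real.sqrt (1 - ‖⟪u, v⟫_ℂ‖ ^ 2) := by
  have hA := (isHermitian_vecMulVec_star (u : n → ℂ)).sub
    (isHermitian_vecMulVec_star (v : n → ℂ))
  rw [matPosPart, hA.trace_cfc, Complex.re_sum]
  simp only [hA.eigenvalues_vecMulVec_star_sub]
  exact hA.eigenvectorBasis.sum_max_sq_norm_inner_sub_sq_norm_inner_le hu hv
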